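/- Let G be a group with finite generating set S, Σ = S ∪ S⁻¹, and fix D ≥ 0. The collection of D-contracting cone types is finite: the set { Cone^D(u) : u is a geodesic word over Σ } is a finite set of subsets of Σ*. -/

import Mathlib

/-! Words over the alphabet `Σ = S ∪ S⁻¹` in a group `G` with finite generating
set `S`, word length, geodesic words, and `D`-contracting geodesic words. -/

section Defs

variable {G : Type*} [Group G]

/-- `g` is a letter of the alphabet `Σ = S ∪ S⁻¹`. -/
def IsLetter (S : Finset G) (g : G) : Prop := g ∈ S ∨ g⁻¹ ∈ S

/-- The word length `|g|`: the minimum length of a list over `Σ = S ∪ S⁻¹`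
whose product is `g`. -/
noncomputable def wordLength (S : Finset G) (g : G) : ℕ :=
  sInf {n | ∃ l : List G, (∀ x ∈ l, IsLetter S x) ∧ l.prod = g ∧ l.length = n}

/-- The word metric `d(g,h) = |g⁻¹h|`. -/
noncomputable def wordDist (S : Finset G) (g h : G) : ℕ := wordLength S (g⁻¹ * h)

/-- A word (list of letters of `Σ`) is geodesic if the word length of its
product equals its length. -/
def IsGeodesicWord (S : Finset G) (w : List G) : Prop :=
  (∀ x ∈ w, IsLetter S x) ∧ wordLength S w.prod = w.length

/-- `P_{i,j}(w)`: the vertices `a₁⋯a_k` for `i ≤ k ≤ j` of the subsegment of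
the path of prefix products of `w`. -/
def segVerts (w : List G) (i j : ℕ) : Set G :=
  {g | ∃ k, i ≤ k ∧ k ≤ j ∧ (w.take k).prod = g}

/-- The closed ball of radius `r` about `g₀` in the word metric. -/
def wordBall (S : Finset G) (g₀ : G) (r : ℕ) : Set G :=
  {h | wordDist S g₀ h ≤ r}

/-- The projection `π_P(x)` of a point `x` to a subset `P` of `G`:
the points of `P` at minimal word-metric distance from `x`. -/
def projPt (S : Finset G) (P : Set G) (x : G) : Set G :=
  {p ∈ P | ∀ q ∈ P, wordDist S x p ≤ wordDist S x q}

/-- The projection `π_P(B) = ⋃_{x ∈ B} π_P(x)` of a set `B` to `P`. -/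
def projSet (S : Finset G) (P B : Set G) : Set G :=
  ⋃ x ∈ B, projPt S P x

/-- A word `w` over `Σ` is a `D`-contracting geodesic word if it is geodesic
and, for every `0 ≤ i ≤ j ≤ |w|` and every ball `B` (in the word metric)
disjoint from `P_{i,j}(w)`, the diameter of `π_{P_{i,j}(w)}(B)` in the word
metric is at most `D`. -/
def IsContractingWord (S : Finset G) (D : ℝ) (w : List G) : Prop :=
  IsGeodesicWord S w ∧
    ∀ i j : ℕ, i ≤ j → j ≤ w.length → ∀ g₀ : G, ∀ r : ℕ,
      Disjoint (wordBall S g₀ r) (segVerts w i j) →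
        ∀ p ∈ projSet S (segVerts w i j) (wordBall S g₀ r),
          ∀ q ∈ projSet S (segVerts w i j) (wordBall S g₀ r),
            (wordDist S p q : ℝ) ≤ D

end Defs

/-- The `D`-contracting cone of a word `u`: all words `w` over `Σ` such that
the concatenation `uw` is a `D`-contracting geodesic word. -/
def cone {G : Type*} [Group G] (S : Finset G) (D : ℝ) (u : List G) : Set (List G) :=
  {w | (∀ x ∈ w, IsLetter S x) ∧ IsContractingWord S D (u ++ w)}

/-! A contracting geodesic word `u` of length at least `2D + 2` has its cone determined by its last
`2D + 2` letters together with the relative word lengths `g ↦ |u g| - |u|` on a ball whose radius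
depends only on `D`; shorter words are determined outright, these data range over a finite set,
and a geodesic word that is not contracting has empty cone.

To show `w ∈ Cone(u)` gives `w ∈ Cone(u')` for `u'` with the same data, add letters one at a time.
A geodesic from `1` to the end of `u'wα` passes near the end of `u'`: it stays near the contracting
path `u'w` (Morse property) and its projections to that path move in bounded steps. So a shortcut
for `u'wα` would give one for `uwα`, keeping `u'wα` geodesic. Its segments lie inside `u'w`, are
left translates of segments of `uwα` starting in the common tail, or are unions of one of each
overlapping in at least `2D + 2` vertices, and such a union is contracting with the same constant.
-/

open scoped Pointwise

lemma exists_gap_around {Q : ℕ → Prop} {N t : ℕ} (h0 : Q 0) (hN : Q N) (ht : t ≤ N)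
    (hQt : ¬ Q t) : ∃ a b, a < t ∧ t < b ∧ b ≤ N ∧ Q a ∧ Q b ∧ ∀ s, a < s → s < b → ¬ Q s := by
  classical
  have hex : ∃ b, t ≤ b ∧ Q b := ⟨N, ht, hN⟩
  have ha : Q (Nat.findGreatest Q t) := Nat.findGreatest_spec (Nat.zero_le t) h0
  refine ⟨Nat.findGreatest Q t, Nat.find hex, ?_, ?_, Nat.find_min' hex ⟨ht, hN⟩, ha,
    (Nat.find_spec hex).2, fun s has hsb hQs => ?_⟩
  · exact (Nat.findGreatest_le t).lt_of_ne fun h => hQt (h ▸ ha)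
  · exact (Nat.find_spec hex).1.lt_of_ne fun h => hQt (h ▸ (Nat.find_spec hex).2)
  · rcases le_or_gt s t with hst | hts
    · exact Nat.findGreatest_is_greatest has hst hQs
    · exact Nat.find_min hex hsb ⟨hts.le, hQs⟩

lemma exists_le_le_add_of_step_le {f : ℕ → ℕ} {n c N : ℕ} (h0 : f 0 ≤ n) (hN : n ≤ f N)
    (hstep : ∀ s < N, f (s + 1) ≤ f s + c) : ∃ s ≤ N, n ≤ f s ∧ f s ≤ n + c := by
  induction N with
  | zero => exact ⟨0, le_rfl, hN, by omega⟩
  | succ N ih =>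
    by_cases h : n ≤ f N
    · obtain ⟨s, hs, h'⟩ := ih h fun s hs => hstep s (by omega)
      exact ⟨s, by omega, h'⟩
    · exact ⟨N + 1, le_rfl, hN, by have := hstep N (by omega); omega⟩

section

variable {G : Type*} [Group G] {S : Finset G}

lemma setOf_isLetter : {g : G | IsLetter S g} = (S : Set G) ∪ (S : Set G)⁻¹ := rfl

lemma IsLetter.inv {g : G} (h : IsLetter S g) : IsLetter S g⁻¹ := by
  rcases h with h | h
  · exact Or.inr (by simpa using h)
  · exact Or.inl h

lemma exists_letters_prod_eq (hS : Subgroup.closure (S : Set G) = ⊤) (g : G) :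
    ∃ l : List G, (∀ x ∈ l, IsLetter S x) ∧ l.prod = g := by
  have hg : g ∈ (Subgroup.closure (S : Set G)).toSubmonoid := by simp [hS]
  rw [Subgroup.closure_toSubmonoid] at hg
  exact Submonoid.exists_list_of_mem_closure hg

lemma wordLength_prod_le {l : List G} (hl : ∀ x ∈ l, IsLetter S x) :
    wordLength S l.prod ≤ l.length :=
  Nat.sInf_le ⟨l, hl, rfl, rfl⟩

lemma exists_letters_length_eq_wordLength (hS : Subgroup.closure (S : Set G) = ⊤) (g : G) :
    ∃ l : List G, (∀ x ∈ l, IsLetter S x) ∧ l.prod = g ∧ l.length = wordLength S g := by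
  obtain ⟨l, hl, hg⟩ := exists_letters_prod_eq hS g
  exact Nat.sInf_mem (⟨l.length, l, hl, hg, rfl⟩ : Set.Nonempty {n | ∃ l : List G,
    (∀ x ∈ l, IsLetter S x) ∧ l.prod = g ∧ l.length = n})

lemma isGeodesicWord_of_length_le {w : List G} (hw : ∀ x ∈ w, IsLetter S x)
    (h : w.length ≤ wordLength S w.prod) : IsGeodesicWord S w :=
  ⟨hw, (wordLength_prod_le hw).antisymm h⟩

lemma exists_isGeodesicWord_prod_eq (hS : Subgroup.closure (S : Set G) = ⊤) (g : G) :
    ∃ l : List G, IsGeodesicWord S l ∧ l.prod = g := by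
  obtain ⟨l, hl, rfl, hlen⟩ := exists_letters_length_eq_wordLength hS g
  exact ⟨l, ⟨hl, hlen.symm⟩, rfl⟩

@[simp] lemma wordLength_one : wordLength S (1 : G) = 0 :=
  Nat.le_zero.1 (wordLength_prod_le (l := []) (by simp))

lemma wordLength_le_one {g : G} (hg : IsLetter S g) : wordLength S g ≤ 1 := by
  simpa using wordLength_prod_le (l := [g]) (by simpa using hg)

lemma wordLength_mul_le (hS : Subgroup.closure (S : Set G) = ⊤) (g h : G) :
    wordLength S (g * h) ≤ wordLength S g + wordLength S h := by
  obtain ⟨l₁, hl₁, rfl, hn₁⟩ := exists_letters_length_eq_wordLength hS g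
  obtain ⟨l₂, hl₂, rfl, hn₂⟩ := exists_letters_length_eq_wordLength hS h
  simpa [hn₁, hn₂] using wordLength_prod_le (S := S) (l := l₁ ++ l₂)
    fun x hx => (List.mem_append.1 hx).elim (hl₁ x) (hl₂ x)

lemma wordLength_inv_le (hS : Subgroup.closure (S : Set G) = ⊤) (g : G) :
    wordLength S g⁻¹ ≤ wordLength S g := by
  obtain ⟨l, hl, rfl, hn⟩ := exists_letters_length_eq_wordLength hS g
  rw [List.prod_inv_reverse, ← hn]
  simpa using wordLength_prod_le (S := S) (l := (l.map (·⁻¹)).reverse)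
    (by simpa using fun x hx => by simpa using (hl x⁻¹ hx).inv)

lemma wordLength_inv (hS : Subgroup.closure (S : Set G) = ⊤) (g : G) :
    wordLength S g⁻¹ = wordLength S g :=
  (wordLength_inv_le hS g).antisymm (by simpa using wordLength_inv_le hS g⁻¹)

lemma wordDist_one_left (g : G) : wordDist S 1 g = wordLength S g := by
  simp [wordDist]

@[simp] lemma wordDist_self (g : G) : wordDist S g g = 0 := by
  simp [wordDist]

lemma wordDist_mul_left (a g h : G) : wordDist S (a * g) (a * h) = wordDist S g h := by
  simp [wordDist, mul_assoc]

lemma wordDist_comm (hS : Subgroup.closure (S : Set G) = ⊤) (g h : G) :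
    wordDist S g h = wordDist S h g := by
  rw [wordDist, wordDist, ← wordLength_inv hS]
  simp

lemma wordDist_triangle (hS : Subgroup.closure (S : Set G) = ⊤) (g h k : G) :
    wordDist S g k ≤ wordDist S g h + wordDist S h k := by
  simpa [wordDist, mul_assoc] using wordLength_mul_le hS (g⁻¹ * h) (h⁻¹ * k)

def vertex (w : List G) (k : ℕ) : G := (w.take k).prod

@[simp] lemma vertex_zero (w : List G) : vertex w 0 = 1 := by simp [vertex]

lemma vertex_length (w : List G) : vertex w w.length = w.prod := by simp [vertex]

lemma vertex_add (w : List G) (s k : ℕ) :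
    vertex w (s + k) = vertex w s * ((w.drop s).take k).prod := by
  simp [vertex, List.take_add]

lemma vertex_append_of_le {u : List G} (w : List G) {k : ℕ} (hk : k ≤ u.length) :
    vertex (u ++ w) k = vertex u k := by
  simp [vertex, List.take_append_of_le_length hk]

lemma vertex_append_add (u w : List G) (k : ℕ) :
    vertex (u ++ w) (u.length + k) = u.prod * vertex w k := by
  simp [vertex, List.take_append, List.take_of_length_le (Nat.le_add_right _ _)]

lemma vertex_mem_segVerts (w : List G) {i j k : ℕ} (hi : i ≤ k) (hj : k ≤ j) :
    vertex w k ∈ segVerts w i j :=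
  ⟨k, hi, hj, rfl⟩

lemma segVerts_mono (w : List G) {i i' j j' : ℕ} (hi : i ≤ i') (hj : j' ≤ j) :
    segVerts w i' j' ⊆ segVerts w i j := by
  rintro _ ⟨k, hik, hkj, rfl⟩
  exact ⟨k, hi.trans hik, hkj.trans hj, rfl⟩

lemma segVerts_append_of_le {u : List G} (w : List G) (i : ℕ) {j : ℕ} (hj : j ≤ u.length) :
    segVerts (u ++ w) i j = segVerts u i j := by
  ext g
  refine exists_congr fun k => and_congr_right fun _ => and_congr_right fun hkj => ?_
  rw [← vertex, ← vertex, vertex_append_of_le w (hkj.trans hj)]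

lemma segVerts_append_add (u w : List G) (a b : ℕ) :
    segVerts (u ++ w) (u.length + a) (u.length + b) = u.prod • segVerts w a b := by
  ext g
  simp only [Set.mem_smul_set, smul_eq_mul]
  constructor
  · rintro ⟨k, hak, hkb, rfl⟩
    obtain ⟨k, rfl⟩ := Nat.exists_eq_add_of_le (le_trans (Nat.le_add_right _ _) hak)
    exact ⟨vertex w k, ⟨k, by omega, by omega, rfl⟩, (vertex_append_add u w k).symm⟩
  · rintro ⟨_, ⟨k, hak, hkb, rfl⟩, rfl⟩
    exact ⟨u.length + k, by omega, by omega, vertex_append_add u w k⟩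

lemma wordDist_vertex_le {w : List G} (hw : ∀ x ∈ w, IsLetter S x) {s t : ℕ} (hst : s ≤ t) :
    wordDist S (vertex w s) (vertex w t) ≤ t - s := by
  obtain ⟨k, rfl⟩ := Nat.exists_eq_add_of_le hst
  rw [wordDist, vertex_add, inv_mul_cancel_left]
  refine (wordLength_prod_le fun x hx => hw x ?_).trans (by simp)
  exact List.mem_of_mem_drop (List.mem_of_mem_take hx)

lemma IsGeodesicWord.wordDist_vertex (hS : Subgroup.closure (S : Set G) = ⊤) {w : List G}
    (hw : IsGeodesicWord S w) {s t : ℕ} (hst : s ≤ t) (ht : t ≤ w.length) :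
    wordDist S (vertex w s) (vertex w t) = t - s := by
  refine (wordDist_vertex_le hw.1 hst).antisymm ?_
  have h0s := wordDist_vertex_le hw.1 (Nat.zero_le s)
  have htw := wordDist_vertex_le hw.1 ht
  have : w.length ≤ wordDist S (vertex w 0) (vertex w s) +
      (wordDist S (vertex w s) (vertex w t) + wordDist S (vertex w t) (vertex w w.length)) :=
    calc w.length = wordDist S (vertex w 0) (vertex w w.length) := by
          rw [vertex_zero, vertex_length, wordDist_one_left, hw.2]
      _ ≤ _ := wordDist_triangle hS _ (vertex w s) _
      _ ≤ _ := Nat.add_le_add_left (wordDist_triangle hS _ (vertex w t) _) _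
  omega

lemma IsGeodesicWord.le_add_wordDist_vertex (hS : Subgroup.closure (S : Set G) = ⊤)
    {w : List G} (hw : IsGeodesicWord S w) (s : ℕ) {t : ℕ} (ht : t ≤ w.length) :
    t ≤ s + wordDist S (vertex w s) (vertex w t) := by
  rcases le_total s t with hst | hts
  · rw [hw.wordDist_vertex hS hst ht]; omega
  · omega

lemma IsGeodesicWord.wordLength_vertex (hS : Subgroup.closure (S : Set G) = ⊤) {w : List G}
    (hw : IsGeodesicWord S w) {t : ℕ} (ht : t ≤ w.length) : wordLength S (vertex w t) = t := by
  simpa [wordDist_one_left] using hw.wordDist_vertex hS (Nat.zero_le t) ht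

lemma IsGeodesicWord.of_append_left (hS : Subgroup.closure (S : Set G) = ⊤) {u w : List G}
    (h : IsGeodesicWord S (u ++ w)) : IsGeodesicWord S u := by
  have hu : ∀ x ∈ u, IsLetter S x := fun x hx => h.1 x (List.mem_append_left w hx)
  have hw : ∀ x ∈ w, IsLetter S x := fun x hx => h.1 x (List.mem_append_right u hx)
  refine isGeodesicWord_of_length_le hu ?_
  have h₁ := wordLength_mul_le hS u.prod w.prod
  have h₂ := wordLength_prod_le hw
  rw [← List.prod_append, h.2, List.length_append] at h₁
  omega

lemma exists_wordDist_eq (hS : Subgroup.closure (S : Set G) = ⊤) {x y : G} {k : ℕ}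
    (hk : k ≤ wordDist S x y) :
    ∃ z, wordDist S x z = k ∧ wordDist S z y = wordDist S x y - k := by
  obtain ⟨l, hl, hprod⟩ := exists_isGeodesicWord_prod_eq hS (x⁻¹ * y)
  have hlen : l.length = wordDist S x y := by rw [← hl.2, hprod, wordDist]
  have hy : x * vertex l l.length = y := by rw [vertex_length, hprod, mul_inv_cancel_left]
  refine ⟨x * vertex l k, ?_, ?_⟩
  · have h := hl.wordDist_vertex hS (Nat.zero_le k) (by omega)
    rwa [← wordDist_mul_left x, vertex_zero, mul_one, Nat.sub_zero] at h
  · calc wordDist S (x * vertex l k) y = wordDist S (x * vertex l k) (x * vertex l l.length) := by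
          rw [hy]
      _ = wordDist S x y - k := by
          rw [wordDist_mul_left, hl.wordDist_vertex hS (hlen ▸ hk) le_rfl, hlen]

noncomputable def wordInfDist (S : Finset G) (x : G) (P : Set G) : ℕ :=
  sInf (wordDist S x '' P)

lemma wordInfDist_le {x p : G} {P : Set G} (hp : p ∈ P) : wordInfDist S x P ≤ wordDist S x p :=
  Nat.sInf_le ⟨p, hp, rfl⟩

lemma exists_mem_projPt {P : Set G} (hP : P.Nonempty) (x : G) : ∃ p, p ∈ projPt S P x := by
  obtain ⟨p, hp, hd⟩ := Nat.sInf_mem (hP.image (wordDist S x))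
  exact ⟨p, hp, fun q hq => hd ▸ wordInfDist_le hq⟩

lemma wordDist_eq_wordInfDist {x p : G} {P : Set G} (hp : p ∈ projPt S P x) :
    wordDist S x p = wordInfDist S x P := by
  obtain ⟨q, hq, hd⟩ := Nat.sInf_mem (Set.Nonempty.image (wordDist S x) ⟨p, hp.1⟩)
  exact ((hp.2 q hq).trans_eq hd).antisymm (wordInfDist_le hp.1)

lemma mem_projPt_of_subset {x p : G} {P Q : Set G} (hQP : Q ⊆ P) (hp : p ∈ projPt S P x)
    (hpQ : p ∈ Q) : p ∈ projPt S Q x :=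
  ⟨hpQ, fun q hq => hp.2 q (hQP hq)⟩

lemma wordInfDist_le_add (hS : Subgroup.closure (S : Set G) = ⊤) (P : Set G) (x y : G) :
    wordInfDist S x P ≤ wordDist S x y + wordInfDist S y P := by
  rcases P.eq_empty_or_nonempty with rfl | hP
  · simp [wordInfDist]
  obtain ⟨p, hp⟩ := exists_mem_projPt (S := S) hP y
  rw [← wordDist_eq_wordInfDist hp]
  exact (wordInfDist_le hp.1).trans (wordDist_triangle hS x y p)

lemma mem_wordBall_self (g : G) (r : ℕ) : g ∈ wordBall S g r := by
  simp [wordBall]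

lemma disjoint_wordBall_of_lt {g : G} {P : Set G} {r : ℕ} (hr : r < wordInfDist S g P) :
    Disjoint (wordBall S g r) P :=
  Set.disjoint_left.2 fun _ hx hxP => (hr.trans_le (wordInfDist_le hxP)).not_ge hx

lemma wordBall_mul (a g : G) (r : ℕ) : wordBall S (a * g) r = a • wordBall S g r := by
  ext h
  rw [Set.mem_smul_set_iff_inv_smul_mem, smul_eq_mul]
  change wordDist S (a * g) h ≤ r ↔ wordDist S g (a⁻¹ * h) ≤ r
  rw [← wordDist_mul_left a g, mul_inv_cancel_left]

lemma projPt_smul (a x : G) (P : Set G) :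
    projPt S (a • P) (a * x) = a • projPt S P x := by
  ext p
  obtain ⟨p, rfl⟩ : ∃ p', a * p' = p := ⟨a⁻¹ * p, mul_inv_cancel_left a p⟩
  simp only [projPt, ← Set.image_smul, Set.mem_image, smul_eq_mul, wordDist_mul_left,
    mul_right_inj, exists_eq_right, Set.mem_ofPred_eq, forall_exists_index, and_imp,
    forall_apply_eq_imp_iff₂]

def IsContractingSet (S : Finset G) (D : ℕ) (P : Set G) : Prop :=
  ∀ g₀ r, Disjoint (wordBall S g₀ r) P → ∀ x ∈ wordBall S g₀ r, ∀ y ∈ wordBall S g₀ r,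
    ∀ p ∈ projPt S P x, ∀ q ∈ projPt S P y, wordDist S p q ≤ D

def IsNatContractingWord (S : Finset G) (D : ℕ) (w : List G) : Prop :=
  IsGeodesicWord S w ∧ ∀ i j, i ≤ j → j ≤ w.length → IsContractingSet S D (segVerts w i j)

lemma isContractingWord_iff {D : ℝ} (hD : 0 ≤ D) (w : List G) :
    IsContractingWord S D w ↔ IsNatContractingWord S ⌊D⌋₊ w := by
  refine and_congr_right fun _ => forall₄_congr fun i j _ _ => forall₃_congr fun g₀ r _ => ?_
  simp only [projSet, Set.mem_iUnion₂, ← Nat.le_floor_iff hD]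
  constructor
  · intro h x hx y hy p hp q hq
    exact h p ⟨x, hx, hp⟩ q ⟨y, hy, hq⟩
  · rintro h p ⟨x, hx, hp⟩ q ⟨y, hy, hq⟩
    exact h x hx y hy p hp q hq

lemma IsNatContractingWord.of_append_left (hS : Subgroup.closure (S : Set G) = ⊤) {D : ℕ}
    {u w : List G} (h : IsNatContractingWord S D (u ++ w)) : IsNatContractingWord S D u := by
  refine ⟨h.1.of_append_left hS, fun i j hij hj => ?_⟩
  rw [← segVerts_append_of_le w i hj]
  exact h.2 i j hij (by simp; omega)

lemma IsContractingSet.smul {D : ℕ} {P : Set G} (hP : IsContractingSet S D P) (a : G) :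
    IsContractingSet S D (a • P) := by
  intro g₀ r hdisj x hx y hy p hp q hq
  rw [← mul_inv_cancel_left a g₀, wordBall_mul] at hdisj hx hy
  rw [Set.disjoint_smul_set] at hdisj
  rw [Set.mem_smul_set] at hx hy
  obtain ⟨x, hx, rfl⟩ := hx
  obtain ⟨y, hy, rfl⟩ := hy
  rw [smul_eq_mul, projPt_smul] at hp hq
  obtain ⟨p, hp, rfl⟩ := hp
  obtain ⟨q, hq, rfl⟩ := hq
  simpa [wordDist_mul_left] using hP _ r hdisj x hx y hy p hp q hq

lemma isContractingSet_smul_iff {D : ℕ} {P : Set G} (a : G) :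
    IsContractingSet S D (a • P) ↔ IsContractingSet S D P :=
  ⟨fun h => by simpa using h.smul a⁻¹, fun h => h.smul a⟩

lemma isContractingSet_segVerts_append_add {D : ℕ} (u w : List G) (a b : ℕ) :
    IsContractingSet S D (segVerts (u ++ w) (u.length + a) (u.length + b)) ↔
      IsContractingSet S D (segVerts w a b) := by
  rw [segVerts_append_add, isContractingSet_smul_iff]

lemma IsContractingSet.wordDist_le_of_lt {D : ℕ} {P : Set G} (hP : IsContractingSet S D P)
    {x y p q : G} (hxy : wordDist S x y < wordInfDist S x P) (hp : p ∈ projPt S P x)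
    (hq : q ∈ projPt S P y) : wordDist S p q ≤ D :=
  hP x _ (disjoint_wordBall_of_lt (Nat.sub_one_lt_of_lt hxy)) x (mem_wordBall_self x _) y
    (Nat.le_sub_one_of_lt hxy) p hp q hq

lemma IsContractingSet.wordDist_le_add_four (hS : Subgroup.closure (S : Set G) = ⊤) {D : ℕ}
    {P : Set G} (hP : IsContractingSet S D P) {x y p q : G} (hxy : wordDist S x y ≤ 1)
    (hp : p ∈ projPt S P x) (hq : q ∈ projPt S P y) : wordDist S p q ≤ D + 4 := by
  rcases lt_or_ge 1 (wordInfDist S x P) with hfar | hnear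
  · exact (hP.wordDist_le_of_lt (hxy.trans_lt hfar) hp hq).trans (Nat.le_add_right D 4)
  have hpx := wordDist_eq_wordInfDist hp
  have hqy := wordDist_eq_wordInfDist hq
  have hyx := wordInfDist_le_add hS P y x
  have hpq := (wordDist_triangle hS p x q).trans
    (Nat.add_le_add_left (wordDist_triangle hS x y q) _)
  rw [wordDist_comm hS p x] at hpq
  rw [wordDist_comm hS y x] at hyx
  omega

lemma IsContractingSet.wordDist_le_of_subset {D : ℕ} {P Q : Set G} (hQ : IsContractingSet S D Q)
    (hQP : Q ⊆ P) {g₀ x y p q : G} {r : ℕ} (hdisj : Disjoint (wordBall S g₀ r) P)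
    (hx : x ∈ wordBall S g₀ r) (hy : y ∈ wordBall S g₀ r) (hp : p ∈ projPt S P x)
    (hq : q ∈ projPt S P y) (hpQ : p ∈ Q) (hqQ : q ∈ Q) : wordDist S p q ≤ D :=
  hQ g₀ r (hdisj.mono_right hQP) x hx y hy p (mem_projPt_of_subset hQP hp hpQ)
    q (mem_projPt_of_subset hQP hq hqQ)

/-- Let `L = segVerts w i j₁` and let `z` be the neighbour of `q = vertex w kq` on a geodesic from
`y`. As `y` projects to `q`, the ball about `y` through `z` misses `L`, so the projections to `L` of
`x` and `y`, and of `y` and `z`, are `D`-close. But `z` is within `kq - a + 1` of `vertex w a ∈ L`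
for `a = kp + 2D + 3`, which would give a path from `vertex w kp` to `q` shorter than `kq - kp`. -/
lemma IsGeodesicWord.le_of_mem_projPt_segVerts (hS : Subgroup.closure (S : Set G) = ⊤)
    {w : List G} (hw : IsGeodesicWord S w) {D i j₁ j : ℕ} (hj₁ : j₁ ≤ j) (hj : j ≤ w.length)
    (hL : IsContractingSet S D (segVerts w i j₁)) {g₀ x y : G} {r kp kq : ℕ}
    (hdisj : Disjoint (wordBall S g₀ r) (segVerts w i j)) (hx : x ∈ wordBall S g₀ r)
    (hy : y ∈ wordBall S g₀ r) (hp : vertex w kp ∈ projPt S (segVerts w i j) x)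
    (hq : vertex w kq ∈ projPt S (segVerts w i j) y) (hikp : i ≤ kp) (hkqj : kq ≤ j)
    (hkp : kp + 2 * D + 3 ≤ j₁) : kq ≤ j₁ := by
  by_contra! hkq
  set a := kp + 2 * D + 3
  set q := vertex w kq
  have hLP : segVerts w i j₁ ⊆ segVerts w i j := segVerts_mono w le_rfl hj₁
  have haL : vertex w a ∈ segVerts w i j₁ := vertex_mem_segVerts w (by omega) hkp
  have hyq : 1 ≤ wordDist S y q := by
    by_contra! h
    have hy' : wordDist S g₀ y ≤ r := hy
    have : q ∈ wordBall S g₀ r := (wordDist_triangle hS g₀ y q).trans (by omega)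
    exact Set.disjoint_left.1 hdisj this hq.1
  obtain ⟨z, hyz, hzq⟩ := exists_wordDist_eq hS (Nat.sub_le (wordDist S y q) 1)
  obtain ⟨ξ, hξ⟩ := exists_mem_projPt (S := S) ⟨_, haL⟩ y
  obtain ⟨ζ, hζ⟩ := exists_mem_projPt (S := S) ⟨_, haL⟩ z
  have hyL : wordDist S y q ≤ wordInfDist S y (segVerts w i j₁) :=
    wordDist_eq_wordInfDist hξ ▸ hq.2 ξ (hLP hξ.1)
  have hξζ : wordDist S ξ ζ ≤ D := hL.wordDist_le_of_lt (by omega) hξ hζ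
  have hpξ : wordDist S (vertex w kp) ξ ≤ D :=
    hL g₀ r (hdisj.mono_right hLP) x hx y hy _
      (mem_projPt_of_subset hLP hp (vertex_mem_segVerts w hikp (by omega))) ξ hξ
  have hζz : wordDist S ζ z ≤ 1 + (kq - a) := by
    rw [wordDist_comm hS, wordDist_eq_wordInfDist hζ]
    refine (wordInfDist_le haL).trans ((wordDist_triangle hS z q _).trans ?_)
    rw [wordDist_comm hS q, hw.wordDist_vertex hS (by omega) (by omega)]
    omega
  have hpq : wordDist S (vertex w kp) q ≤ wordDist S (vertex w kp) ξ +
      (wordDist S ξ ζ + (wordDist S ζ z + wordDist S z q)) :=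
    (wordDist_triangle hS _ ξ q).trans <| Nat.add_le_add_left
      ((wordDist_triangle hS ξ ζ q).trans (Nat.add_le_add_left (wordDist_triangle hS ζ z q) _)) _
  rw [hw.wordDist_vertex hS (by omega) (by omega)] at hpq
  omega

theorem IsGeodesicWord.isContractingSet_segVerts_of_overlap
    (hS : Subgroup.closure (S : Set G) = ⊤) {w : List G} (hw : IsGeodesicWord S w)
    {D i i₁ j₁ j : ℕ} (hi : i ≤ i₁) (hij₁ : i₁ + 2 * D + 2 ≤ j₁) (hj₁ : j₁ ≤ j)
    (hj : j ≤ w.length) (hL : IsContractingSet S D (segVerts w i j₁))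
    (hR : IsContractingSet S D (segVerts w i₁ j)) : IsContractingSet S D (segVerts w i j) := by
  intro g₀ r hdisj x hx y hy p hp q hq
  obtain ⟨kp, hikp, hkpj, rfl⟩ := hp.1
  obtain ⟨kq, hikq, hkqj, rfl⟩ := hq.1
  by_cases hkR : i₁ ≤ kp ∧ i₁ ≤ kq
  · exact hR.wordDist_le_of_subset (segVerts_mono w hi le_rfl) hdisj hx hy hp hq
      (vertex_mem_segVerts w hkR.1 hkpj) (vertex_mem_segVerts w hkR.2 hkqj)
  have hkL : kp ≤ j₁ ∧ kq ≤ j₁ := by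
    rcases not_and_or.1 hkR with h | h
    · exact ⟨by omega, hw.le_of_mem_projPt_segVerts hS hj₁ hj hL hdisj hx hy hp hq hikp hkqj
        (by omega)⟩
    · exact ⟨hw.le_of_mem_projPt_segVerts hS hj₁ hj hL hdisj hy hx hq hp hikq hkpj (by omega),
        by omega⟩
  exact hL.wordDist_le_of_subset (segVerts_mono w le_rfl hj₁) hdisj hx hy hp hq
    (vertex_mem_segVerts w hikp hkL.1) (vertex_mem_segVerts w hikq hkL.2)

lemma wordInfDist_vertex_le_add (hS : Subgroup.closure (S : Set G) = ⊤) (P : Set G)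
    {v : List G} (hv : ∀ x ∈ v, IsLetter S x) {s t : ℕ} (hst : s ≤ t) :
    wordInfDist S (vertex v t) P ≤ (t - s) + wordInfDist S (vertex v s) P ∧
      wordInfDist S (vertex v s) P ≤ (t - s) + wordInfDist S (vertex v t) P := by
  have hd := wordDist_vertex_le hv hst
  have h₁ := wordInfDist_le_add hS P (vertex v t) (vertex v s)
  have h₂ := wordInfDist_le_add hS P (vertex v s) (vertex v t)
  rw [wordDist_comm hS] at h₁
  omega

/-- Hop `D + 1` vertices at a time: each hop stays in a ball about its start that misses `P`, so
it moves the projection by at most `D`. -/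
lemma IsGeodesicWord.mul_wordDist_projPt_le (hS : Subgroup.closure (S : Set G) = ⊤) {D : ℕ}
    {P : Set G} (hP : IsContractingSet S D P) {v : List G} (hv : IsGeodesicWord S v) {n : ℕ} :
    ∀ {a : ℕ}, a + n ≤ v.length → (∀ s ≤ n, D + 2 ≤ wordInfDist S (vertex v (a + s)) P) →
      ∀ {p q : G}, p ∈ projPt S P (vertex v a) → q ∈ projPt S P (vertex v (a + n)) →
        (D + 1) * wordDist S p q ≤ D * n + D * (D + 1) := by
  induction n using Nat.strong_induction_on with
  | _ n ih =>
  intro a hn hfar p q hp hq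
  have ha : D + 2 ≤ wordInfDist S (vertex v a) P := by simpa using hfar 0 (Nat.zero_le n)
  rcases le_or_gt n (D + 1) with hshort | hlong
  · have hpq : wordDist S p q ≤ D := hP.wordDist_le_of_lt
      (by rw [hv.wordDist_vertex hS (Nat.le_add_right a n) hn, Nat.add_sub_cancel_left]; omega)
      hp hq
    nlinarith
  obtain ⟨m, rfl⟩ := Nat.exists_eq_add_of_le hlong.le
  obtain ⟨p', hp'⟩ := exists_mem_projPt (S := S) ⟨p, hp.1⟩ (vertex v (a + (D + 1)))
  have hpp' : wordDist S p p' ≤ D := hP.wordDist_le_of_lt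
    (by rw [hv.wordDist_vertex hS (Nat.le_add_right a _) (by omega), Nat.add_sub_cancel_left]
        omega) hp hp'
  have hp'q := ih m (by omega) (a := a + (D + 1)) (by omega)
    (fun s hs => by simpa [Nat.add_assoc] using hfar (D + 1 + s) (by omega)) hp'
    (by simpa [Nat.add_assoc] using hq)
  have htri := wordDist_triangle hS p p' q
  nlinarith

lemma IsGeodesicWord.le_of_wordInfDist_vertex_ge (hS : Subgroup.closure (S : Set G) = ⊤)
    {D : ℕ} {P : Set G} (hP : IsContractingSet S D P) (hPne : P.Nonempty) {v : List G}
    (hv : IsGeodesicWord S v) {a n : ℕ} (hn : a + n ≤ v.length)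
    (hfar : ∀ s ≤ n, D + 2 ≤ wordInfDist S (vertex v (a + s)) P)
    (ha : wordInfDist S (vertex v a) P ≤ D + 2)
    (hb : wordInfDist S (vertex v (a + n)) P ≤ D + 2) :
    n ≤ (D + 1) * (3 * D + 4) := by
  obtain ⟨p, hp⟩ := exists_mem_projPt (S := S) hPne (vertex v a)
  obtain ⟨q, hq⟩ := exists_mem_projPt (S := S) hPne (vertex v (a + n))
  have hpq := hv.mul_wordDist_projPt_le hS hP hn hfar hp hq
  have hn' : n ≤
      wordDist S (vertex v a) p + (wordDist S p q + wordDist S q (vertex v (a + n))) :=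
    calc n = wordDist S (vertex v a) (vertex v (a + n)) := by
          rw [hv.wordDist_vertex hS (Nat.le_add_right a n) hn, Nat.add_sub_cancel_left]
      _ ≤ _ := wordDist_triangle hS _ p _
      _ ≤ _ := Nat.add_le_add_left (wordDist_triangle hS p q _) _
  rw [wordDist_eq_wordInfDist hp, wordDist_comm hS q, wordDist_eq_wordInfDist hq] at hn'
  nlinarith

def morseConst (D : ℕ) : ℕ := (D + 1) * (3 * D + 4) + D + 2

theorem IsGeodesicWord.wordInfDist_vertex_le (hS : Subgroup.closure (S : Set G) = ⊤)
    {D : ℕ} {P : Set G} (hP : IsContractingSet S D P) (hPne : P.Nonempty) {v : List G}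
    (hv : IsGeodesicWord S v) (h₀ : wordInfDist S (vertex v 0) P ≤ 1)
    (hℓ : wordInfDist S (vertex v v.length) P ≤ 1) {t : ℕ} (ht : t ≤ v.length) :
    wordInfDist S (vertex v t) P ≤ morseConst D := by
  unfold morseConst
  by_cases hnear : wordInfDist S (vertex v t) P ≤ D + 1
  · omega
  obtain ⟨a, b, hat, htb, hb, hna, hnb, hgap⟩ :=
    exists_gap_around (Q := fun s => wordInfDist S (vertex v s) P ≤ D + 1) (by omega) (by omega)
      ht hnear
  have hexc := hv.le_of_wordInfDist_vertex_ge hS hP hPne (a := a + 1) (n := b - 1 - (a + 1))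
    (by omega) (fun s hs => by have := hgap (a + 1 + s) (by omega) (by omega); omega)
    (by have := (wordInfDist_vertex_le_add hS P hv.1 (Nat.le_add_right a 1)).1; omega)
    (by have := (wordInfDist_vertex_le_add hS P hv.1 (show b - 1 ≤ b by omega)).2
        rw [show a + 1 + (b - 1 - (a + 1)) = b - 1 by omega]; omega)
  have := (wordInfDist_vertex_le_add hS P hv.1 hat.le).1
  omega

def coneRadius (D : ℕ) : ℕ := morseConst D + D + 4

/-- The projections to `W` of the vertices of a geodesic `v` from `1` to `z` move in steps of at
most `D + 4`, from the start of `W` to its end, so one of them lands near `vertex W n`; the Morse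
bound keeps that vertex of `v` near its projection. -/
theorem IsGeodesicWord.exists_near_vertex (hS : Subgroup.closure (S : Set G) = ⊤) {D : ℕ}
    {W : List G} (hW : IsGeodesicWord S W) (hC : IsContractingSet S D (segVerts W 0 W.length))
    {z : G} (hz : wordDist S W.prod z ≤ 1) {n : ℕ} (hn : n ≤ W.length) :
    ∃ y, wordDist S (vertex W n) y ≤ coneRadius D ∧
      wordLength S y + wordDist S y z ≤ wordLength S z := by
  set P := segVerts W 0 W.length
  have h0P : vertex W 0 ∈ P := vertex_mem_segVerts W le_rfl (Nat.zero_le _)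
  have hℓP : vertex W W.length ∈ P := vertex_mem_segVerts W (Nat.zero_le _) le_rfl
  obtain ⟨v, hv, rfl⟩ := exists_isGeodesicWord_prod_eq hS z
  have h₀ : wordInfDist S (vertex v 0) P = 0 := by
    simpa using wordInfDist_le (S := S) (x := vertex v 0) h0P
  have hz' : wordDist S (vertex v v.length) (vertex W W.length) ≤ 1 := by
    rwa [vertex_length, vertex_length, wordDist_comm hS]
  have hℓ : wordInfDist S (vertex v v.length) P ≤ 1 := (wordInfDist_le hℓP).trans hz'
  have hproj : ∀ s, ∃ k ≤ W.length, vertex W k ∈ projPt S P (vertex v s) := fun s => by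
    obtain ⟨p, hp⟩ := exists_mem_projPt (S := S) ⟨_, h0P⟩ (vertex v s)
    obtain ⟨k, -, hk, rfl⟩ := hp.1
    exact ⟨k, hk, hp⟩
  choose f hfW hf using hproj
  have hfv : ∀ s, wordDist S (vertex v s) (vertex W (f s)) = wordInfDist S (vertex v s) P :=
    fun s => wordDist_eq_wordInfDist (hf s)
  have hf₀ : f 0 = 0 := by
    have := hW.wordDist_vertex hS (Nat.zero_le (f 0)) (hfW 0)
    rw [show vertex W 0 = vertex v 0 by simp, hfv, h₀] at this
    omega
  have hfℓ : W.length ≤ f v.length + 2 := by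
    have h₁ := hW.le_add_wordDist_vertex hS (f v.length) (le_refl W.length)
    have h₂ :=
      wordDist_triangle hS (vertex W (f v.length)) (vertex v v.length) (vertex W W.length)
    rw [wordDist_comm hS (vertex W (f v.length)) (vertex v v.length), hfv] at h₂
    omega
  have hstep : ∀ s < v.length, f (s + 1) ≤ f s + (D + 4) := fun s hs =>
    (hW.le_add_wordDist_vertex hS (f s) (hfW _)).trans <| Nat.add_le_add_left
      (hC.wordDist_le_add_four hS (by rw [hv.wordDist_vertex hS (Nat.le_succ s) hs]; omega)
        (hf s) (hf (s + 1))) _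
  obtain ⟨s, hs, hns, hsn⟩ := exists_le_le_add_of_step_le (n := n - 2) (by omega) (by omega) hstep
  refine ⟨vertex v s, ?_, ?_⟩
  · have hnf : wordDist S (vertex W n) (vertex W (f s)) ≤ D + 4 := by
      rcases le_total n (f s) with h | h
      · exact (wordDist_vertex_le hW.1 h).trans (by omega)
      · rw [wordDist_comm hS]; exact (wordDist_vertex_le hW.1 h).trans (by omega)
    have hmorse := hv.wordInfDist_vertex_le hS hC ⟨_, h0P⟩ (by omega) hℓ hs
    have := wordDist_triangle hS (vertex W n) (vertex W (f s)) (vertex v s)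
    rw [wordDist_comm hS (vertex W (f s)), hfv] at this
    unfold coneRadius
    omega
  · rw [hv.wordLength_vertex hS hs, ← vertex_length v, hv.wordDist_vertex hS hs le_rfl,
      vertex_length, hv.2]
    omega

noncomputable def relLength (S : Finset G) (u : List G) (g : G) : ℤ :=
  wordLength S (u.prod * g) - u.length

lemma IsGeodesicWord.abs_relLength_le (hS : Subgroup.closure (S : Set G) = ⊤) {u : List G}
    (hu : IsGeodesicWord S u) (g : G) : |relLength S u g| ≤ wordLength S g := by
  have h₁ := wordLength_mul_le hS u.prod g
  have h₂ := wordLength_mul_le hS (u.prod * g) g⁻¹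
  rw [mul_inv_cancel_right, wordLength_inv hS, hu.2] at h₂
  rw [hu.2] at h₁
  rw [relLength, abs_le]
  omega

lemma relLength_le_of_eq_on_ball (hS : Subgroup.closure (S : Set G) = ⊤) {R : ℕ} {u u' : List G}
    (hrel : ∀ g, wordLength S g ≤ R → relLength S u g = relLength S u' g) {y c : G}
    (hy : wordDist S u'.prod y ≤ R)
    (hyc : wordLength S y + wordDist S y (u'.prod * c) ≤ wordLength S (u'.prod * c)) :
    relLength S u c ≤ relLength S u' c := by
  have hg := hrel (u'.prod⁻¹ * y) hy
  rw [relLength, relLength, mul_inv_cancel_left] at hg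
  have := wordLength_mul_le hS (u.prod * (u'.prod⁻¹ * y)) (y⁻¹ * (u'.prod * c))
  rw [show u.prod * (u'.prod⁻¹ * y) * (y⁻¹ * (u'.prod * c)) = u.prod * c by group] at this
  unfold wordDist at hyc
  unfold relLength
  omega

theorem isGeodesicWord_append_singleton (hS : Subgroup.closure (S : Set G) = ⊤) {D : ℕ}
    {u u' w : List G} {α : G} (hu'w : IsNatContractingWord S D (u' ++ w))
    (huw : IsGeodesicWord S (u ++ w ++ [α]))
    (hrel : ∀ g, wordLength S g ≤ coneRadius D → relLength S u g = relLength S u' g) :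
    IsGeodesicWord S (u' ++ w ++ [α]) := by
  have hα : IsLetter S α := huw.1 α (by simp)
  have hlet : ∀ x ∈ u' ++ w ++ [α], IsLetter S x := by
    simp only [List.mem_append, List.mem_singleton]
    rintro x (hx | rfl)
    exacts [hu'w.1.1 x (List.mem_append.2 hx), hα]
  refine isGeodesicWord_of_length_le hlet ?_
  obtain ⟨y, hy, hyz⟩ := hu'w.1.exists_near_vertex hS (hu'w.2 0 _ (Nat.zero_le _) le_rfl)
    (z := (u' ++ w).prod * α) (by rw [wordDist, inv_mul_cancel_left]; exact wordLength_le_one hα)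
    (n := u'.length) (by simp)
  rw [vertex_append_of_le w le_rfl, vertex_length] at hy
  have key := relLength_le_of_eq_on_ball hS hrel hy (c := (w ++ [α]).prod)
    (by simpa [mul_assoc] using hyz)
  have := huw.2
  simp only [relLength, List.prod_append, List.prod_singleton, List.length_append,
    List.length_singleton, mul_assoc] at key this ⊢
  omega

theorem IsNatContractingWord.of_append_tail (hS : Subgroup.closure (S : Set G) = ⊤) {D : ℕ}
    {u₀ u₀' t : List G} (ht : 2 * D + 2 ≤ t.length)
    (hrel : ∀ g, wordLength S g ≤ coneRadius D →
      relLength S (u₀ ++ t) g = relLength S (u₀' ++ t) g)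
    (hu' : IsNatContractingWord S D (u₀' ++ t)) {w : List G}
    (h : IsNatContractingWord S D (u₀ ++ t ++ w)) : IsNatContractingWord S D (u₀' ++ t ++ w) := by
  induction w using List.reverseRecOn with
  | nil => simpa using hu'
  | append_singleton w α ih =>
    rw [← List.append_assoc] at h ⊢
    have hW := ih (h.of_append_left hS)
    have hgeo := isGeodesicWord_append_singleton hS hW h.1 hrel
    have htail : ∀ a b, a ≤ b → b ≤ (t ++ w ++ [α]).length →
        IsContractingSet S D
          (segVerts (u₀' ++ t ++ w ++ [α]) (u₀'.length + a) (u₀'.length + b)) :=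
      fun a b hab hb => by
        have := h.2 (u₀.length + a) (u₀.length + b) (by omega) (by simp at hb ⊢; omega)
        simp only [List.append_assoc] at this hb ⊢
        rwa [isContractingSet_segVerts_append_add] at this ⊢
    refine ⟨hgeo, fun i j hij hj => ?_⟩
    rcases le_or_gt j (u₀' ++ t ++ w).length with hjW | hjW
    · rw [segVerts_append_of_le [α] i hjW]
      exact hW.2 i j hij hjW
    rcases le_or_gt u₀'.length i with hi | hi
    · obtain ⟨a, rfl⟩ := Nat.exists_eq_add_of_le hi
      obtain ⟨b, rfl⟩ := Nat.exists_eq_add_of_le (hi.trans hij)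
      exact htail a b (by omega) (by simp at hj ⊢; omega)
    simp only [List.length_append, List.length_singleton] at hj hjW
    refine hgeo.isContractingSet_segVerts_of_overlap hS hi.le (j₁ := u₀'.length + t.length)
      (by omega) (by omega) (by simp; omega) ?_ ?_
    · rw [segVerts_append_of_le [α] i (by simp)]
      exact hW.2 i _ (by omega) (by simp)
    · convert htail 0 (j - u₀'.length) (Nat.zero_le _) (by simp; omega) using 2 <;> omega

lemma finite_setOf_letters_length_le (S : Finset G) (n : ℕ) :
    {l : List G | (∀ x ∈ l, IsLetter S x) ∧ l.length ≤ n}.Finite := by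
  have : Finite {g : G | IsLetter S g} := by
    rw [setOf_isLetter]
    exact (S.finite_toSet.union S.finite_toSet.inv).to_subtype
  refine ((List.finite_length_le {g : G | IsLetter S g} n).image (List.map Subtype.val)).subset ?_
  rintro l ⟨hl, hn⟩
  lift l to List {g : G | IsLetter S g} using hl
  exact ⟨l, (by simpa using hn : l.length ≤ n), rfl⟩

lemma finite_setOf_wordLength_le (hS : Subgroup.closure (S : Set G) = ⊤) (R : ℕ) :
    {g : G | wordLength S g ≤ R}.Finite := by
  refine ((finite_setOf_letters_length_le S R).image List.prod).subset fun g hg => ?_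
  obtain ⟨l, hl, rfl, hlen⟩ := exists_letters_length_eq_wordLength hS g
  exact ⟨l, ⟨hl, hlen ▸ hg⟩, rfl⟩

/-- For `u` shorter than `2D + 2` the first component is all of `u`. -/
noncomputable def coneData (S : Finset G) (D : ℕ) (u : List G) :
    List G × ({g : G | wordLength S g ≤ coneRadius D} → ℤ) :=
  (u.drop (u.length - (2 * D + 2)), fun g => relLength S u g)

theorem finite_image_coneData (hS : Subgroup.closure (S : Set G) = ⊤) (D : ℕ) :
    (coneData S D '' {u | IsGeodesicWord S u}).Finite := by
  have : Finite {g : G | wordLength S g ≤ coneRadius D} :=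
    (finite_setOf_wordLength_le hS _).to_subtype
  refine ((finite_setOf_letters_length_le S (2 * D + 2)).prod
    (Set.Finite.pi fun _ => Set.finite_Icc (-(coneRadius D : ℤ)) (coneRadius D))).subset ?_
  rintro _ ⟨u, hu, rfl⟩
  refine ⟨⟨fun x hx => hu.1 x (List.mem_of_mem_drop hx), by simp [coneData]; omega⟩,
    fun g _ => ?_⟩
  exact abs_le.1 ((hu.abs_relLength_le hS g).trans (by exact_mod_cast g.2))

theorem cone_subset_cone_of_coneData_eq (hS : Subgroup.closure (S : Set G) = ⊤) {D : ℝ}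
    (hD : 0 ≤ D) {u u' : List G} (hu' : IsNatContractingWord S ⌊D⌋₊ u')
    (h : coneData S ⌊D⌋₊ u = coneData S ⌊D⌋₊ u') : cone S D u ⊆ cone S D u' := by
  rintro w ⟨hw, huw⟩
  refine ⟨hw, ?_⟩
  rw [isContractingWord_iff hD] at huw ⊢
  simp only [coneData, Prod.mk.injEq] at h
  obtain ⟨htail, hrel⟩ := h
  replace hrel : ∀ g, wordLength S g ≤ coneRadius ⌊D⌋₊ → relLength S u g = relLength S u' g :=
    fun g hg => congrFun hrel ⟨g, hg⟩
  set K := 2 * ⌊D⌋₊ + 2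
  set t := u.drop (u.length - K)
  rcases lt_or_ge t.length K with hshort | hlong
  · have hu : u.length - K = 0 := by simp [t] at hshort; omega
    have hu'K : u'.length - K = 0 := by simp only [t, htail] at hshort; simp at hshort; omega
    have : u = u' := by simpa [t, hu, hu'K] using htail
    exact this ▸ huw
  obtain ⟨u₀, hu₀⟩ : ∃ u₀, u = u₀ ++ t := ⟨_, (List.take_append_drop _ u).symm⟩
  obtain ⟨u₀', hu₀'⟩ : ∃ u₀', u' = u₀' ++ t := ⟨_, htail ▸ (List.take_append_drop _ u').symm⟩
  rw [hu₀] at huw hrel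
  rw [hu₀'] at hu' hrel ⊢
  exact hu'.of_append_tail hS hlong hrel huw

end

/-- there are only finitely many `D`-contracting cone types. -/
theorem finitely_many_cone_types {G : Type} [Group G] (S : Finset G)
    (hS : Subgroup.closure (S : Set G) = ⊤) (D : ℝ) (hD : 0 ≤ D) :
    {C : Set (List G) | ∃ u : List G, IsGeodesicWord S u ∧ C = cone S D u}.Finite := by
  set A := {u : List G | IsNatContractingWord S ⌊D⌋₊ u}
  have hfiber : ∀ d, {C | ∃ u ∈ A, coneData S ⌊D⌋₊ u = d ∧ C = cone S D u}.Subsingleton := by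
    rintro _ _ ⟨u, hu, rfl, rfl⟩ _ ⟨u', hu', hd, rfl⟩
    exact (cone_subset_cone_of_coneData_eq hS hD hu' hd.symm).antisymm
      (cone_subset_cone_of_coneData_eq hS hD hu hd)
  have hdata : (coneData S ⌊D⌋₊ '' A).Finite :=
    (finite_image_coneData hS ⌊D⌋₊).subset (Set.image_mono fun u (hu : u ∈ A) => hu.1)
  have hfin := hdata.biUnion fun d _ => (hfiber d).finite
  refine (hfin.insert ∅).subset ?_
  rintro _ ⟨u, -, rfl⟩
  rcases (cone S D u).eq_empty_or_nonempty with h | ⟨w, -, hw⟩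
  · exact Or.inl h
  have hu : u ∈ A := ((isContractingWord_iff hD _).1 hw).of_append_left hS
  exact Or.inr (Set.mem_biUnion (Set.mem_image_of_mem _ hu) ⟨u, hu, rfl, rfl⟩)
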